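/- arXiv:2404.16628 — 2 statements merged into one kernel-verified Lean document; each statement's English description precedes it below -/
import Mathlib

section
/- Let (G,𝒫) be a group pair and let S ⊆ G/𝒫 be a maximal simplex, i.e. a subset maximal with respect to the property that for every finite subset {g₁P₁, …, g_kP_k} ⊆ S the subgroup ⋂_{i=1}^k g_iP_ig_i⁻¹ is infinite. Let K(S) = ⋂{gPg⁻¹ : gP ∈ S} and suppose K(S) is infinite. Then {g ∈ G : gS = S} = comm_G(K(S)), where gS = {g·(g'P) : g'P ∈ S}. -/
/-!
Write `K(S)` for the subgroup fixing every coset of `S`, so that `K(gS) = g K(S) g⁻¹`.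
If `gS = S` then `g` normalizes `K(S)`. Conversely, if `g` commensurates `K(S)`, then
`K(S) ∩ g K(S) g⁻¹` has finite index in the infinite group `K(S)`, hence is infinite; it fixes
`S ∪ gS` pointwise, so `S ∪ gS` is a simplex and maximality of `S` gives `gS ⊆ S`.
Applying this to `g⁻¹` as well yields `gS = S`.
-/

open scoped Pointwise ENNReal NNReal

namespace CIC

variable {G : Type*} [Group G] {H : Type*} [Group H]

/-- Word length of `g` with respect to the generating set `S`: the least `n` such that `g`
is a product of `n` elements of `S ∪ S⁻¹`. -/
noncomputable def wordLength (S : Set G) (g : G) : ℕ :=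
  sInf {n | ∃ l : List G, (∀ x ∈ l, x ∈ S ∨ x⁻¹ ∈ S) ∧ l.length = n ∧ l.prod = g}

/-- The word metric on `G` associated to the generating set `S`. -/
noncomputable def wdist (S : Set G) (g h : G) : ℕ := wordLength S (g⁻¹ * h)

/-- Closed `r`-neighborhood of `A` with respect to the word metric of `S`. -/
def nbhd (S : Set G) (r : ℝ) (A : Set G) : Set G :=
  {x | ∃ a ∈ A, (wdist S a x : ℝ) ≤ r}

/-- Hausdorff distance between subsets of `G`, valued in `[0,∞]`: the infimum of those
`r ≥ 0` such that each set is contained in the closed `r`-neighborhood of the other,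
the infimum of the empty set being `∞`. -/
noncomputable def hdist (S : Set G) (A B : Set G) : ℝ≥0∞ :=
  ⨅ (r : ℝ≥0) (_ : A ⊆ nbhd S (r : ℝ) B ∧ B ⊆ nbhd S (r : ℝ) A), (r : ℝ≥0∞)

/-- The conjugate subgroup `g P g⁻¹`. -/
def conj (g : G) (P : Subgroup G) : Subgroup G := P.map (MulAut.conj g).toMonoidHom

/-- The set `G/𝒫` of all left cosets `gP` with `g ∈ G` and `P ∈ 𝒫`. -/
def cosets (Ps : Finset (Subgroup G)) : Set (Set G) :=
  {A | ∃ (g : G) (P : Subgroup G), P ∈ Ps ∧ A = g • (P : Set G)}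

/-- A group pair `(G, 𝒫)`: `S` is a finite generating set of `G` and `𝒫` is a finite
collection of infinite subgroups of `G`. -/
structure IsGroupPair (S : Finset G) (Ps : Finset (Subgroup G)) : Prop where
  generates : Subgroup.closure (S : Set G) = ⊤
  infinite : ∀ P ∈ Ps, (P : Set G).Infinite

/-- An `(L,C,M)`-quasi-isometry of group pairs `q : (G,𝒫) → (H,𝒬)`. -/
structure IsPairQI (S : Finset G) (T : Finset H)
    (Ps : Finset (Subgroup G)) (Qs : Finset (Subgroup H))
    (L C M : ℝ≥0) (q : G → H) : Prop where
  one_le : 1 ≤ L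
  lower : ∀ a b : G, (wdist (S : Set G) a b : ℝ) / L - C ≤ (wdist (T : Set H) (q a) (q b) : ℝ)
  upper : ∀ a b : G, (wdist (T : Set H) (q a) (q b) : ℝ) ≤ L * (wdist (S : Set G) a b : ℝ) + C
  dense : ∀ y : H, ∃ x : G, (wdist (T : Set H) (q x) y : ℝ) ≤ C
  coset_fwd : ∀ A ∈ cosets Ps, ∃ B ∈ cosets Qs, hdist (T : Set H) (q '' A) B < (M : ℝ≥0∞)
  coset_bwd : ∀ B ∈ cosets Qs, ∃ A ∈ cosets Ps, hdist (T : Set H) (q '' A) B < (M : ℝ≥0∞)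

/-- A simplex of the coset intersection complex: a subset `Sx ⊆ G/𝒫` such that every
non-empty finite subset `{g₁P₁, …, g_kP_k} ⊆ Sx` has `⋂ᵢ gᵢPᵢgᵢ⁻¹` infinite.  (For a left
coset `A = gP` the subgroup `gPg⁻¹` is exactly the stabilizer of `A` under the left
multiplication action of `G` on subsets.) -/
def IsSimplex (Ps : Finset (Subgroup G)) (Sx : Set (Set G)) : Prop :=
  Sx ⊆ cosets Ps ∧ ∀ F : Finset (Set G), ↑F ⊆ Sx → F.Nonempty →
    ((⨅ A ∈ F, MulAction.stabilizer G A : Subgroup G) : Set G).Infinite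

/-- A maximal simplex: one not properly contained in another simplex. -/
def IsMaxSimplex (Ps : Finset (Subgroup G)) (Sx : Set (Set G)) : Prop :=
  IsSimplex Ps Sx ∧ ∀ Sx' : Set (Set G), IsSimplex Ps Sx' → Sx ⊆ Sx' → Sx' = Sx

open MulAction

section FixingSubgroup

variable {G α : Type*} [Group G] [MulAction G α]

theorem iInf_stabilizer_eq_fixingSubgroup (s : Set α) :
    ⨅ a ∈ s, stabilizer G a = fixingSubgroup G s := by
  ext g
  simp [mem_fixingSubgroup_iff, Subgroup.mem_iInf]

theorem fixingSubgroup_smul_eq_toConjAct_smul (g : G) (s : Set α) :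
    fixingSubgroup G (g • s) = ConjAct.toConjAct g • fixingSubgroup G s :=
  SubMulAction.fixingSubgroup_smul_eq_fixingSubgroup_map_conj s g

theorem mem_commensurator_fixingSubgroup_of_smul_eq {g : G} {s : Set α} (hg : g • s = s) :
    g ∈ Subgroup.Commensurable.commensurator (fixingSubgroup G s) := by
  rw [Subgroup.Commensurable.commensurator_mem_iff, ← fixingSubgroup_smul_eq_toConjAct_smul, hg]

end FixingSubgroup

theorem _root_.Subgroup.inf_infinite_of_relIndex_ne_zero {H K : Subgroup G}
    (hK : (K : Set G).Infinite) (h : H.relIndex K ≠ 0) :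
    ((H ⊓ K : Subgroup G) : Set G).Infinite := by
  intro hfin
  have : Finite (H ⊓ K : Subgroup G) := hfin.to_subtype
  have hbot : (⊥ : Subgroup G).relIndex (H ⊓ K) ≠ 0 := by
    rw [Subgroup.relIndex_bot_left]
    exact Nat.card_pos.ne'
  have hcard : (⊥ : Subgroup G).relIndex K ≠ 0 :=
    Subgroup.relIndex_ne_zero_trans hbot (by rwa [Subgroup.inf_relIndex_right])
  rw [Subgroup.relIndex_bot_left] at hcard
  exact hK (Nat.finite_of_card_ne_zero hcard)

theorem smul_mem_cosets {Ps : Finset (Subgroup G)} {A : Set G} (hA : A ∈ cosets Ps) (g : G) :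
    g • A ∈ cosets Ps := by
  obtain ⟨a, P, hP, rfl⟩ := hA
  exact ⟨g * a, P, hP, smul_smul g a _⟩

theorem isSimplex_of_infinite_fixingSubgroup {Ps : Finset (Subgroup G)} {Sx : Set (Set G)}
    (hSx : Sx ⊆ cosets Ps) (hK : (fixingSubgroup G Sx : Set G).Infinite) : IsSimplex Ps Sx := by
  refine ⟨hSx, fun F hF _ => hK.mono ?_⟩
  intro g hg
  simp only [SetLike.mem_coe, Subgroup.mem_iInf]
  exact fun A hA => (mem_fixingSubgroup_iff G).mp hg A (hF hA)

namespace IsMaxSimplex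

variable {Ps : Finset (Subgroup G)} {Sx : Set (Set G)}

theorem smul_subset_of_infinite (hmax : IsMaxSimplex Ps Sx) {g : G}
    (hg : ((fixingSubgroup G Sx ⊓ fixingSubgroup G (g • Sx) : Subgroup G) : Set G).Infinite) :
    g • Sx ⊆ Sx := by
  have hcosets : Sx ∪ g • Sx ⊆ cosets Ps := by
    rintro _ (hA | ⟨A, hA, rfl⟩)
    · exact hmax.1.1 hA
    · exact smul_mem_cosets (hmax.1.1 hA) g
  have hunion : IsSimplex Ps (Sx ∪ g • Sx) :=
    isSimplex_of_infinite_fixingSubgroup hcosets (by rwa [fixingSubgroup_union])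
  exact Set.subset_union_right.trans (hmax.2 _ hunion Set.subset_union_left).subset

theorem smul_subset_of_mem_commensurator (hmax : IsMaxSimplex Ps Sx)
    (hK : (fixingSubgroup G Sx : Set G).Infinite) {g : G}
    (hg : g ∈ Subgroup.Commensurable.commensurator (fixingSubgroup G Sx)) : g • Sx ⊆ Sx := by
  rw [Subgroup.Commensurable.commensurator_mem_iff] at hg
  refine hmax.smul_subset_of_infinite ?_
  rw [fixingSubgroup_smul_eq_toConjAct_smul, inf_comm]
  exact Subgroup.inf_infinite_of_relIndex_ne_zero hK hg.1

theorem smul_eq_of_mem_commensurator (hmax : IsMaxSimplex Ps Sx)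
    (hK : (fixingSubgroup G Sx : Set G).Infinite) {g : G}
    (hg : g ∈ Subgroup.Commensurable.commensurator (fixingSubgroup G Sx)) : g • Sx = Sx := by
  refine (hmax.smul_subset_of_mem_commensurator hK hg).antisymm ?_
  rw [Set.subset_smul_set_iff]
  exact hmax.smul_subset_of_mem_commensurator hK (inv_mem hg)

end IsMaxSimplex

theorem statement16_general (Ps : Finset (Subgroup G))
    (Sx : Set (Set G)) (hmax : IsMaxSimplex Ps Sx)
    (hK : ((⨅ A ∈ Sx, MulAction.stabilizer G A : Subgroup G) : Set G).Infinite) :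
    {g : G | g • Sx = Sx} =
      (Subgroup.Commensurable.commensurator (⨅ A ∈ Sx, MulAction.stabilizer G A) : Set G) := by
  rw [iInf_stabilizer_eq_fixingSubgroup] at hK ⊢
  ext g
  exact ⟨mem_commensurator_fixingSubgroup_of_smul_eq, hmax.smul_eq_of_mem_commensurator hK⟩

/-- If `Sx` is a maximal simplex whose pointwise stabilizer `K(Sx) = ⋂ {gPg⁻¹ : gP ∈ Sx}` is
infinite, then the setwise stabilizer of `Sx` is the commensurator of `K(Sx)`. -/
theorem statement16 (S : Finset G) (Ps : Finset (Subgroup G)) (hpair : IsGroupPair S Ps)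
    (Sx : Set (Set G)) (hmax : IsMaxSimplex Ps Sx)
    (hK : ((⨅ A ∈ Sx, MulAction.stabilizer G A : Subgroup G) : Set G).Infinite) :
    {g : G | g • Sx = Sx} =
      (Subgroup.Commensurable.commensurator (⨅ A ∈ Sx, MulAction.stabilizer G A) : Set G) :=
  statement16_general Ps Sx hmax hK

end CIC
end

section
/- Let q : (G,𝒫) → (H,𝒬) be an (L,C,M)-quasi-isometry of group pairs. If (H,𝒬) has τ-fenced infinite intersections, then (G,𝒫) has (Lτ + (C+2M)L)-fenced infinite intersections. Here a group pair (G,𝒫) has τ-fenced infinite intersections if for all g₁P₁, g₂P₂ ∈ G/𝒫 such that g₁P₁g₁⁻¹ ∩ g₂P₂g₂⁻¹ is infinite, the infimum distance inf{d_G(x,y) : x ∈ g₁P₁, y ∈ g₂P₂} is at most τ. -/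
open scoped Pointwise ENNReal NNReal

namespace CIC

variable {G : Type*} [Group G] {H : Type*} [Group H]

/-- `(G,𝒫)` has `τ`-fenced infinite intersections: whenever `g₁P₁g₁⁻¹ ∩ g₂P₂g₂⁻¹` is
infinite, the infimum distance between the cosets `g₁P₁` and `g₂P₂` is at most `τ`
(since the word metric is `ℕ`-valued, this infimum is attained, so this is equivalent to the
existence of points `x ∈ g₁P₁`, `y ∈ g₂P₂` with `d(x,y) ≤ τ`). -/
def Fenced (S : Set G) (Ps : Finset (Subgroup G)) (τ : ℝ) : Prop :=
  ∀ (g₁ g₂ : G) (P₁ P₂ : Subgroup G), P₁ ∈ Ps → P₂ ∈ Ps →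
    ((conj g₁ P₁ ⊓ conj g₂ P₂ : Subgroup G) : Set G).Infinite →
    ∃ x ∈ g₁ • (P₁ : Set G), ∃ y ∈ g₂ • (P₂ : Set G), (wdist S x y : ℝ) ≤ τ

/-! For `k ∈ g₁P₁g₁⁻¹ ∩ g₂P₂g₂⁻¹` the points `kg₁ ∈ g₁P₁` and `kg₂ ∈ g₂P₂` are at distance
`d(g₁, g₂)`, so an infinite intersection yields infinitely many points of `g₁P₁` in a bounded
neighbourhood of `g₂P₂`. Conversely, if infinitely many `x ∈ g₁P₁` lie within `R` of some
`y(x) ∈ g₂P₂`, then, balls being finite, the displacement `y(x)⁻¹x` takes the same value on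
an infinite set of such `x`, and on that set the quotients `x x₀⁻¹ = y(x) y(x₀)⁻¹` lie in both
conjugates. Bounded neighbourhoods of cosets are moved by the quasi-isometry to bounded
neighbourhoods of the fellow-travelling cosets `h₁Q₁`, `h₂Q₂`, finitely-to-one since balls are
finite, so `h₁Q₁h₁⁻¹ ∩ h₂Q₂h₂⁻¹` is infinite too. Pulling the fence points of `h₁Q₁` and `h₂Q₂`
back along the quasi-isometry gives points of `g₁P₁` and `g₂P₂` at distance at most
`L(τ + 2M + C)`. -/

section WordMetric

variable {S : Set G}

lemma exists_list_length_eq_wordLength (hS : Subgroup.closure S = ⊤) (g : G) :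
    ∃ l : List G, (∀ x ∈ l, x ∈ S ∨ x⁻¹ ∈ S) ∧ l.length = wordLength S g ∧ l.prod = g := by
  refine Nat.sInf_mem (s := {n | ∃ l : List G, (∀ x ∈ l, x ∈ S ∨ x⁻¹ ∈ S) ∧ l.length = n ∧
    l.prod = g}) ?_
  have hg : g ∈ Submonoid.closure (S ∪ S⁻¹) := by
    rw [← Subgroup.closure_toSubmonoid, Subgroup.mem_toSubmonoid, hS]
    exact Subgroup.mem_top g
  obtain ⟨l, hl, hprod⟩ := Submonoid.exists_list_of_mem_closure hg
  exact ⟨l.length, l, hl, rfl, hprod⟩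

lemma wordLength_le_length {l : List G} (hl : ∀ x ∈ l, x ∈ S ∨ x⁻¹ ∈ S) :
    wordLength S l.prod ≤ l.length :=
  Nat.sInf_le ⟨l, hl, rfl, rfl⟩

lemma wordLength_mul_le (hS : Subgroup.closure S = ⊤) (a b : G) :
    wordLength S (a * b) ≤ wordLength S a + wordLength S b := by
  obtain ⟨la, hla, hlena, rfl⟩ := exists_list_length_eq_wordLength hS a
  obtain ⟨lb, hlb, hlenb, rfl⟩ := exists_list_length_eq_wordLength hS b
  rw [← hlena, ← hlenb, ← List.length_append, ← List.prod_append]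
  exact wordLength_le_length fun x hx => (List.mem_append.mp hx).elim (hla x) (hlb x)

lemma wordLength_inv_le (hS : Subgroup.closure S = ⊤) (g : G) :
    wordLength S g⁻¹ ≤ wordLength S g := by
  obtain ⟨l, hl, hlen, rfl⟩ := exists_list_length_eq_wordLength hS g
  rw [List.prod_inv_reverse, ← hlen]
  refine (wordLength_le_length fun x hx => ?_).trans_eq (by simp)
  obtain ⟨y, hy, rfl⟩ := List.mem_map.mp (List.mem_reverse.mp hx)
  simpa only [inv_inv, or_comm] using hl y hy

lemma wordLength_inv (hS : Subgroup.closure S = ⊤) (g : G) :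
    wordLength S g⁻¹ = wordLength S g :=
  le_antisymm (wordLength_inv_le hS g) (by simpa using wordLength_inv_le hS g⁻¹)

lemma wdist_mul_left (k a b : G) : wdist S (k * a) (k * b) = wdist S a b := by
  simp [wdist, mul_assoc]

lemma wdist_comm (hS : Subgroup.closure S = ⊤) (a b : G) : wdist S a b = wdist S b a := by
  rw [wdist, wdist, ← wordLength_inv hS, mul_inv_rev, inv_inv]

lemma wdist_triangle (hS : Subgroup.closure S = ⊤) (a b c : G) :
    wdist S a c ≤ wdist S a b + wdist S b c := by
  simpa [wdist, mul_assoc] using wordLength_mul_le hS (a⁻¹ * b) (b⁻¹ * c)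

lemma wdist_le_of_wdist_le (hS : Subgroup.closure S = ⊤) {a a' b b' : G} {r s t : ℝ}
    (ha : (wdist S a' a : ℝ) ≤ r) (hab : (wdist S a b : ℝ) ≤ t) (hb : (wdist S b' b : ℝ) ≤ s) :
    (wdist S a' b' : ℝ) ≤ r + t + s := by
  have h₁ := wdist_triangle hS a' a b'
  have h₂ := wdist_triangle hS a b b'
  rw [wdist_comm hS b b'] at h₂
  have h : (wdist S a' b' : ℝ) ≤ wdist S a' a + (wdist S a b + wdist S b' b) := by
    exact_mod_cast h₁.trans (Nat.add_le_add_left h₂ _)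
  linarith

lemma finite_setOf_wordLength_le (hSfin : S.Finite) (hS : Subgroup.closure S = ⊤) (r : ℝ) :
    {g : G | (wordLength S g : ℝ) ≤ r}.Finite := by
  have : Finite ↥(S ∪ S⁻¹) := (hSfin.union hSfin.inv).to_subtype
  refine ((List.finite_length_le ↥(S ∪ S⁻¹) ⌈r⌉₊).image
    fun l => (l.map Subtype.val).prod).subset fun g hg => ?_
  obtain ⟨l, hl, hlen, rfl⟩ := exists_list_length_eq_wordLength hS g
  lift l to List ↥(S ∪ S⁻¹) using hl
  refine ⟨l, ?_, rfl⟩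
  have : (wordLength S (l.map Subtype.val).prod : ℝ) ≤ ⌈r⌉₊ := hg.trans (Nat.le_ceil r)
  rw [← hlen, List.length_map] at this
  exact_mod_cast this

lemma finite_setOf_wdist_le (hSfin : S.Finite) (hS : Subgroup.closure S = ⊤) (a : G) (r : ℝ) :
    {x : G | (wdist S a x : ℝ) ≤ r}.Finite :=
  (finite_setOf_wordLength_le hSfin hS r).preimage (mul_right_injective a⁻¹).injOn

lemma subset_nbhd_of_hdist_lt {A B : Set G} {M : ℝ≥0} (h : hdist S A B < M) :
    A ⊆ nbhd S M B ∧ B ⊆ nbhd S M A := by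
  obtain ⟨r, hr⟩ := iInf_lt_iff.mp h
  obtain ⟨⟨hAB, hBA⟩, hrM⟩ := iInf_lt_iff.mp hr
  have hrM : (r : ℝ) ≤ M := by exact_mod_cast hrM.le
  exact ⟨fun x hx => let ⟨b, hb, hd⟩ := hAB hx; ⟨b, hb, hd.trans hrM⟩,
    fun x hx => let ⟨a, ha, hd⟩ := hBA hx; ⟨a, ha, hd.trans hrM⟩⟩

end WordMetric

section Conjugates

lemma mul_mem_smul_of_mem_conj {g k : G} {P : Subgroup G} (hk : k ∈ conj g P) :
    k * g ∈ g • (P : Set G) := by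
  obtain ⟨p, hp, rfl⟩ := Subgroup.mem_map.mp hk
  exact ⟨p, hp, by simp [mul_assoc]⟩

lemma mul_inv_mem_conj {g x y : G} {P : Subgroup G} (hx : x ∈ g • (P : Set G))
    (hy : y ∈ g • (P : Set G)) : x * y⁻¹ ∈ conj g P := by
  obtain ⟨p, hp, rfl⟩ := hx
  obtain ⟨p', hp', rfl⟩ := hy
  exact Subgroup.mem_map.mpr ⟨p * p'⁻¹, mul_mem hp (inv_mem hp'), by simp [mul_assoc]⟩

variable {S : Set G} {g₁ g₂ : G} {P₁ P₂ : Subgroup G}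

lemma infinite_inter_nbhd_of_infinite_conj_inf
    (h : ((conj g₁ P₁ ⊓ conj g₂ P₂ : Subgroup G) : Set G).Infinite) :
    (g₁ • (P₁ : Set G) ∩ nbhd S (wdist S g₂ g₁) (g₂ • (P₂ : Set G))).Infinite := by
  refine (h.image (mul_left_injective g₁).injOn).mono ?_
  rintro _ ⟨k, hk, rfl⟩
  obtain ⟨hk₁, hk₂⟩ := Subgroup.mem_inf.mp hk
  exact ⟨mul_mem_smul_of_mem_conj hk₁, k * g₂, mul_mem_smul_of_mem_conj hk₂,
    by rw [wdist_mul_left]⟩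

lemma infinite_conj_inf_of_infinite_inter_nbhd (hSfin : S.Finite)
    (hS : Subgroup.closure S = ⊤) {R : ℝ}
    (h : (g₁ • (P₁ : Set G) ∩ nbhd S R (g₂ • (P₂ : Set G))).Infinite) :
    ((conj g₁ P₁ ⊓ conj g₂ P₂ : Subgroup G) : Set G).Infinite := by
  set A := g₁ • (P₁ : Set G) ∩ nbhd S R (g₂ • (P₂ : Set G))
  choose! y hy hyd using fun x (hx : x ∈ A) => hx.2
  set c : G → G := fun x => (y x)⁻¹ * x
  have hcA : (c '' A).Finite := (finite_setOf_wordLength_le hSfin hS R).subset <| by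
    rintro _ ⟨x, hx, rfl⟩
    exact hyd x hx
  obtain ⟨v, -, hv⟩ : ∃ v ∈ c '' A, (A ∩ c ⁻¹' {v}).Infinite := by
    by_contra! hfin
    exact h (Set.Finite.of_finite_fibers c hcA hfin)
  obtain ⟨x₀, hx₀A, hx₀v⟩ := hv.nonempty
  have hy_eq : ∀ x ∈ A ∩ c ⁻¹' {v}, y x = x * v⁻¹ := fun x ⟨_, (hxv : (y x)⁻¹ * x = v)⟩ => by
    rw [← hxv]; group
  refine (hv.image (mul_left_injective x₀⁻¹).injOn).mono ?_
  rintro _ ⟨x, hx, rfl⟩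
  refine Subgroup.mem_inf.mpr ⟨mul_inv_mem_conj hx.1.1 hx₀A.1, ?_⟩
  have hxx₀ : x * x₀⁻¹ = y x * (y x₀)⁻¹ := by
    rw [hy_eq x hx, hy_eq x₀ ⟨hx₀A, hx₀v⟩]; group
  show x * x₀⁻¹ ∈ _
  rw [hxx₀]
  exact mul_inv_mem_conj (hy x hx.1) (hy x₀ hx₀A)

end Conjugates

section QuasiIsometry

lemma IsPairQI.wdist_le_mul {S : Finset G} {T : Finset H} {Ps : Finset (Subgroup G)}
    {Qs : Finset (Subgroup H)} {L C M : ℝ≥0} {q : G → H} (hq : IsPairQI S T Ps Qs L C M q)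
    (a b : G) : (wdist (S : Set G) a b : ℝ) ≤ L * (wdist (T : Set H) (q a) (q b) + C) := by
  have hL : (0 : ℝ) < L := zero_lt_one.trans_le (by exact_mod_cast hq.one_le)
  exact (div_le_iff₀' hL).mp (sub_le_iff_le_add.mp (hq.lower a b))

variable {S : Set G} {T : Set H}

lemma infinite_image_of_wdist_le (hSfin : S.Finite) (hS : Subgroup.closure S = ⊤)
    (hT : Subgroup.closure T = ⊤) {f φ : G → H} {L C : ℝ≥0} {r : ℝ}
    (hf : ∀ a b, (wdist S a b : ℝ) ≤ L * (wdist T (f a) (f b) + C)) {A : Set G}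
    (hA : A.Infinite) (hφ : ∀ x ∈ A, (wdist T (φ x) (f x) : ℝ) ≤ r) : (φ '' A).Infinite := by
  intro hfin
  refine hA (Set.Finite.of_finite_fibers φ hfin ?_)
  rintro _ ⟨x₀, hx₀, rfl⟩
  refine (finite_setOf_wdist_le hSfin hS x₀ (L * (r + r + C))).subset ?_
  rintro x ⟨hx, hxx₀ : φ x = φ x₀⟩
  have h₀ := hφ x₀ hx₀
  have h₁ := hφ x hx
  rw [wdist_comm hT] at h₀
  rw [hxx₀] at h₁
  have hff : (wdist T (f x₀) (f x) : ℝ) ≤ r + r :=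
    (Nat.cast_le.mpr (wdist_triangle hT _ (φ x₀) _)).trans (by push_cast; linarith)
  calc (wdist S x₀ x : ℝ) ≤ L * (wdist T (f x₀) (f x) + C) := hf x₀ x
    _ ≤ L * (r + r + C) := by gcongr

lemma infinite_inter_nbhd_of_infinite_inter_nbhd (hSfin : S.Finite)
    (hS : Subgroup.closure S = ⊤) (hT : Subgroup.closure T = ⊤) {q : G → H} {L C : ℝ≥0}
    {r D : ℝ} (hlow : ∀ a b, (wdist S a b : ℝ) ≤ L * (wdist T (q a) (q b) + C))
    (hup : ∀ a b, (wdist T (q a) (q b) : ℝ) ≤ L * wdist S a b + C)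
    {A₁ A₂ : Set G} {B₁ B₂ : Set H} (h₁ : q '' A₁ ⊆ nbhd T r B₁) (h₂ : q '' A₂ ⊆ nbhd T r B₂)
    (h : (A₁ ∩ nbhd S D A₂).Infinite) :
    (B₁ ∩ nbhd T (r + (L * D + C) + r) B₂).Infinite := by
  choose! b hb hbd using fun x (hx : x ∈ A₁) => h₁ ⟨x, hx, rfl⟩
  refine (infinite_image_of_wdist_le hSfin hS hT hlow h fun x hx => hbd x hx.1).mono ?_
  rintro _ ⟨x, ⟨hx, y, hy, hyx⟩, rfl⟩
  obtain ⟨b₂, hb₂, hb₂y⟩ := h₂ ⟨y, hy, rfl⟩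
  refine ⟨hb x hx, b₂, hb₂, wdist_le_of_wdist_le hT hb₂y ?_ (hbd x hx)⟩
  calc (wdist T (q y) (q x) : ℝ) ≤ L * wdist S y x + C := hup y x
    _ ≤ L * D + C := by gcongr

end QuasiIsometry

/-- If `q : (G,𝒫) → (H,𝒬)` is an `(L,C,M)`-quasi-isometry of group pairs and `(H,𝒬)` has
`τ`-fenced infinite intersections, then `(G,𝒫)` has `(Lτ + (C+2M)L)`-fenced infinite
intersections. -/
theorem statement18 (S : Finset G) (T : Finset H)
    (Ps : Finset (Subgroup G)) (Qs : Finset (Subgroup H))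
    (hG : IsGroupPair S Ps) (hH : IsGroupPair T Qs)
    (L C M : ℝ≥0) (q : G → H) (hq : IsPairQI S T Ps Qs L C M q)
    (τ : ℝ≥0) (hfen : Fenced (T : Set H) Qs τ) :
    Fenced (S : Set G) Ps ((L * τ + (C + 2 * M) * L : ℝ≥0) : ℝ) := by
  intro g₁ g₂ P₁ P₂ hP₁ hP₂ hinf
  obtain ⟨_, ⟨h₁, Q₁, hQ₁, rfl⟩, hd₁⟩ := hq.coset_fwd _ ⟨g₁, P₁, hP₁, rfl⟩
  obtain ⟨_, ⟨h₂, Q₂, hQ₂, rfl⟩, hd₂⟩ := hq.coset_fwd _ ⟨g₂, P₂, hP₂, rfl⟩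
  obtain ⟨hqB₁, hB₁q⟩ := subset_nbhd_of_hdist_lt hd₁
  obtain ⟨hqB₂, hB₂q⟩ := subset_nbhd_of_hdist_lt hd₂
  have hHinf : ((conj h₁ Q₁ ⊓ conj h₂ Q₂ : Subgroup H) : Set H).Infinite :=
    infinite_conj_inf_of_infinite_inter_nbhd T.finite_toSet hH.generates <|
      infinite_inter_nbhd_of_infinite_inter_nbhd S.finite_toSet hG.generates hH.generates
        hq.wdist_le_mul hq.upper hqB₁ hqB₂ (infinite_inter_nbhd_of_infinite_conj_inf hinf)
  obtain ⟨u, hu, w, hw, huw⟩ := hfen h₁ h₂ Q₁ Q₂ hQ₁ hQ₂ hHinf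
  obtain ⟨_, ⟨x₁, hx₁, rfl⟩, hx₁u⟩ := hB₁q hu
  obtain ⟨_, ⟨x₂, hx₂, rfl⟩, hx₂w⟩ := hB₂q hw
  refine ⟨x₁, hx₁, x₂, hx₂, ?_⟩
  calc (wdist (S : Set G) x₁ x₂ : ℝ) ≤ L * (wdist (T : Set H) (q x₁) (q x₂) + C) :=
        hq.wdist_le_mul x₁ x₂
    _ ≤ L * (M + τ + M + C) := by
        gcongr; exact wdist_le_of_wdist_le hH.generates hx₁u huw hx₂w
    _ = ((L * τ + (C + 2 * M) * L : ℝ≥0) : ℝ) := by push_cast; ring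

end CIC
end
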